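/- arXiv:math/0506045 — 2 statements merged into one kernel-verified Lean document; each statement's English description precedes it below -/
import Mathlib

section
/- Let C be a code, σ ∈ S_n, C* = σ(C), and suppose for all v ∈ N and variables x we have φ*(σ(v), σ(x)) = σ(φ(v,x)), where φ, φ* are matphi functions for C, C*. Then for every codeword c ∈ C with standard word w (ψ(w) = c), the iterated application of φ* along the letters of σ(w) starting at 1 terminates at 1; consequently σ(c) ∈ C*. -/
/-- Words in the free commutative monoid `[X]`. -/
abbrev Word (n m : ℕ) := Multiset (Fin n × Fin m)

/-- The canonical monoid morphism `ψ : [X] → F_q^n`. -/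
def psi {F : Type*} [Field F] {n m : ℕ} (α : F) (w : Word n m) : Fin n → F :=
  fun i => ∑ j : Fin m, (w.count (i, j) : F) * α ^ (j : ℕ)

/-- The action of `S_n` on words. -/
def permWord {n m : ℕ} (σ : Equiv.Perm (Fin n)) (w : Word n m) : Word n m :=
  w.map fun v => (σ v.1, v.2)

/-- The action of `S_n` on variables. -/
def permVar {n m : ℕ} (σ : Equiv.Perm (Fin n)) (x : Fin n × Fin m) : Fin n × Fin m :=
  (σ x.1, x.2)

/-- The action of `S_n` on `F_q^n`. -/
def permVec {F : Type*} {n : ℕ} (σ : Equiv.Perm (Fin n)) (y : Fin n → F) : Fin n → F :=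
  fun i => y (σ⁻¹ i)

/-- Suppose `C' = σ(C)` on the level of matphi structures:
`φ'(σ(v), σ(x)) = σ(φ(v,x))` for all words `v` and variables `x`, where the
canonical form `cf` is computed by iterating `φ` along the letters of a word
starting from `1`, and a word `u` satisfies `ψ(u) ∈ C` iff `cf(u) = 1`
(similarly for `C'`, `φ'`).  Then for every codeword `c = ψ(w) ∈ C`, iterating
`φ'` along the letters of `σ(w)` starting at `1` terminates at `1`;
consequently `σ(c) ∈ C'`. -/
theorem stmt9 {F : Type*} [Field F] {n m : ℕ} (α : F)
    (C C' : Set (Fin n → F)) (σ : Equiv.Perm (Fin n))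
    (φ φ' : Word n m → Fin n × Fin m → Word n m)
    (hcf : ∀ l : List (Fin n × Fin m),
      psi α (l : Word n m) ∈ C ↔ List.foldl φ 0 l = 0)
    (hcf' : ∀ l : List (Fin n × Fin m),
      psi α (l : Word n m) ∈ C' ↔ List.foldl φ' 0 l = 0)
    (hcompat : ∀ (v : Word n m) (x : Fin n × Fin m),
      φ' (permWord σ v) (permVar σ x) = permWord σ (φ v x)) :
    ∀ l : List (Fin n × Fin m), psi α (l : Word n m) ∈ C →
      List.foldl φ' 0 (l.map (permVar σ)) = 0 ∧
      permVec σ (psi α (l : Word n m)) ∈ C' := by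
  have key : ∀ (l : List (Fin n × Fin m)) (v : Word n m),
      List.foldl φ' (permWord σ v) (l.map (permVar σ)) = permWord σ (List.foldl φ v l) := by
    intro l
    induction l with
    | nil => intro v; rfl
    | cons a t ih => intro v; simpa [hcompat] using ih (φ v a)
  have hperm0 : permWord σ (0 : Word n m) = 0 := rfl
  have hpsi : ∀ (l : List (Fin n × Fin m)),
      psi α ((l.map (permVar σ) : List (Fin n × Fin m)) : Word n m)
        = permVec σ (psi α (l : Word n m)) := by
    intro l
    funext i
    have hinj : Function.Injective (fun v : Fin n × Fin m => (σ v.1, v.2)) := by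
      intro a b h
      simp only [Prod.mk.injEq] at h
      exact Prod.ext (σ.injective h.1) h.2
    simp only [psi, permVec]
    refine Finset.sum_congr rfl fun j _ => ?_
    congr 1
    have h : ((l.map (permVar σ) : List (Fin n × Fin m)) : Word n m)
        = Multiset.map (fun v : Fin n × Fin m => (σ v.1, v.2)) (l : Word n m) := by
      simp only [Multiset.map_coe]; rfl
    rw [h, show (i, j) = (fun v : Fin n × Fin m => (σ v.1, v.2)) (σ⁻¹ i, j) by simp,
      Multiset.count_map_eq_count' _ _ hinj]
  intro l hl
  have h0 : List.foldl φ 0 l = 0 := (hcf l).mp hl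
  have h1 : List.foldl φ' 0 (l.map (permVar σ)) = 0 := by
    have := key l 0
    rw [hperm0] at this
    rw [this, h0, hperm0]
  refine ⟨h1, ?_⟩
  rw [← hpsi]
  exact (hcf' _).mpr h1
end

section
/- For a binary linear code C and the reduced basis G of the ideal I(C) with respect to the error-vector ordering <_e, the one-step reduction relation (first reduce to standard form via x_i² → 1, then apply one usual reduction step modulo G) is noetherian: there is no infinite strictly descending chain of reductions. -/
/-- For a binary code, `[X]` is the free commutative monoid on `x_1, …, x_n`. -/
abbrev BWord (n : ℕ) := Multiset (Fin n)

/-- The set of indices of variables dividing `w`. -/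
def Ind {n : ℕ} (w : BWord n) : Finset (Fin n) := w.toFinset

/-- The error-vector ordering `<_e` built from an admissible ordering `prec`. -/
def ltE {n : ℕ} (prec : BWord n → BWord n → Prop) (u w : BWord n) : Prop :=
  (Ind u).card < (Ind w).card ∨ ((Ind u).card = (Ind w).card ∧ prec u w)

/-- The standard (squarefree) form of a word, obtained by the rules `x_i² → 1`:
each exponent is reduced modulo `2`. -/
def stdW {n : ℕ} (w : BWord n) : BWord n :=
  (w.toFinset.filter fun i => w.count i % 2 = 1).val

/-- One-step reduction: first reduce `w` to its standard form via `x_i² → 1`,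
then apply one usual reduction step modulo `G` (replace a divisor which is a
leading term of a binomial of `G` by the corresponding lower term). -/
def Red {n : ℕ} (G : Set (BWord n × BWord n)) (w w₁ : BWord n) : Prop :=
  ∃ g ∈ G, g.1 ≤ stdW w ∧ w₁ = stdW w - g.1 + g.2

/-- For a binary linear code with reduced basis `G` w.r.t.
`<_e` (each binomial `u - v` of `G` has `v <_e u` with `v` a standard word,
`prec` being admissible), the one-step reduction relation is noetherian:
there is no infinite chain of reductions. -/
theorem stmt11 {n : ℕ} (prec : BWord n → BWord n → Prop)
    (htot : IsStrictTotalOrder (BWord n) prec)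
    (hmul : ∀ u v w : BWord n, prec u v → prec (u + w) (v + w))
    (hone : ∀ u : BWord n, u ≠ 0 → prec 0 u)
    (G : Set (BWord n × BWord n))
    (hG : ∀ g ∈ G, ltE prec g.2 g.1 ∧ ∀ i : Fin n, g.2.count i ≤ 1) :
    WellFounded (fun w₁ w : BWord n => Red G w w₁) := by
  haveI := htot
  -- basic facts about stdW
  have hstd_nodup : ∀ w : BWord n, (stdW w).Nodup := fun w => Finset.nodup _
  have hstd_eq : ∀ w : BWord n, w.Nodup → stdW w = w := by
    intro w h
    unfold stdW
    have hf : w.toFinset.filter (fun i => w.count i % 2 = 1) = w.toFinset := by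
      apply Finset.filter_true_of_mem
      intro i hi
      rw [Multiset.count_eq_one_of_mem h (Multiset.mem_toFinset.mp hi)]
    rw [hf, Multiset.toFinset_val, Multiset.dedup_eq_self.mpr h]
  have hstd_card : ∀ w : BWord n, Multiset.card (stdW w) ≤ w.toFinset.card := by
    intro w
    show ((w.toFinset.filter fun i => w.count i % 2 = 1)).card ≤ _
    exact Finset.card_filter_le _ _
  have hval : ∀ m : BWord n, m.Nodup → (m.toFinset.val : BWord n) = m := by
    intro m h
    rw [Multiset.toFinset_val, Multiset.dedup_eq_self.mpr h]
  -- the measure relation on finsets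
  set R : Finset (Fin n) → Finset (Fin n) → Prop := fun s t => ltE prec s.val t.val with hRdef
  haveI : IsTrans (Finset (Fin n)) R := by
    constructor
    intro a b c hab hbc
    rcases hab with h1 | ⟨h1, h1'⟩ <;> rcases hbc with h2 | ⟨h2, h2'⟩
    · exact Or.inl (h1.trans h2)
    · exact Or.inl (h2 ▸ h1)
    · exact Or.inl (h1 ▸ h2)
    · exact Or.inr ⟨h1.trans h2, Trans.trans h1' h2'⟩
  haveI : IsIrrefl (Finset (Fin n)) R := by
    constructor
    intro a ha
    rcases ha with h | ⟨_, h⟩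
    · exact lt_irrefl _ h
    · exact irrefl _ h
  have hR : WellFounded R := Finite.wellFounded_of_trans_of_irrefl R
  -- main step: a reduction strictly decreases the measure
  have key : ∀ w w₁ : BWord n, Red G w w₁ →
      R (stdW w₁).toFinset (stdW w).toFinset := by
    intro w w₁ ⟨g, hg, hle, hw₁⟩
    have hRgoal : ltE prec (stdW w₁) (stdW w) → R (stdW w₁).toFinset (stdW w).toFinset := by
      intro h
      show ltE prec _ _
      rwa [hval _ (hstd_nodup w₁), hval _ (hstd_nodup w)]
    apply hRgoal
    set s : BWord n := stdW w with hs_def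
    set u : BWord n := g.1
    set v : BWord n := g.2
    have hs : s.Nodup := hstd_nodup w
    have hu : u.Nodup := Multiset.nodup_of_le hle hs
    have hv : v.Nodup := Multiset.nodup_iff_count_le_one.mpr (hG g hg).2
    set a : BWord n := s - u with ha_def
    have ha : a.Nodup := Multiset.nodup_of_le tsub_le_self hs
    have hau : a + u = s := tsub_add_cancel_of_le hle
    have hcards : Multiset.card a + Multiset.card u = Multiset.card s := by
      rw [← Multiset.card_add, hau]
    have hIndcard : ∀ m : BWord n, m.Nodup → (Ind m).card = Multiset.card m :=
      fun m h => Multiset.toFinset_card_of_nodup h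
    have hcard_le : Multiset.card (stdW w₁) ≤ Multiset.card a + Multiset.card v := by
      calc Multiset.card (stdW w₁) ≤ w₁.toFinset.card := hstd_card w₁
        _ ≤ Multiset.card w₁ := Multiset.toFinset_card_le w₁
        _ = Multiset.card a + Multiset.card v := by rw [hw₁, Multiset.card_add]
    rcases (hG g hg).1 with hlt | ⟨heq, hprec⟩
    · -- card of v strictly less than card of u
      left
      rw [hIndcard _ (hstd_nodup w₁), hIndcard _ hs]
      rw [hIndcard _ hv, hIndcard _ hu] at hlt
      omega
    · rw [hIndcard _ hv, hIndcard _ hu] at heq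
      by_cases hd : Disjoint a v
      · -- no cancellation: w₁ is already standard and prec applies
        have hnodup : w₁.Nodup := by
          rw [hw₁]
          exact Multiset.nodup_add.mpr ⟨ha, hv, hd⟩
        have hstdw₁ : stdW w₁ = w₁ := hstd_eq _ hnodup
        right
        constructor
        · rw [hIndcard _ (hstd_nodup w₁), hIndcard _ hs, hstdw₁, hw₁,
            Multiset.card_add, heq, hcards]
        · rw [hstdw₁, hw₁]
          have := hmul v u a hprec
          rwa [add_comm v a, add_comm u a, hau] at this
      · -- cancellation: an index appears in both a and v, card strictly drops
        left
        rw [hIndcard _ (hstd_nodup w₁), hIndcard _ hs]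
        obtain ⟨i, hia, hiv⟩ : ∃ i, i ∈ a ∧ i ∈ v := by
          by_contra hcon
          push_neg at hcon
          exact hd (Multiset.disjoint_left.mpr fun {j} hj => hcon j hj)
        have hiw₁ : i ∈ w₁ := by rw [hw₁]; exact Multiset.mem_add.mpr (Or.inl hia)
        have hcnt : w₁.count i = 2 := by
          rw [hw₁, Multiset.count_add,
            Multiset.count_eq_one_of_mem ha hia, Multiset.count_eq_one_of_mem hv hiv]
        have hssub : w₁.toFinset.filter (fun j => w₁.count j % 2 = 1) ⊂ w₁.toFinset := by
          rw [Finset.filter_ssubset]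
          exact ⟨i, Multiset.mem_toFinset.mpr hiw₁, by rw [hcnt]; decide⟩
        have h1 : Multiset.card (stdW w₁) < w₁.toFinset.card :=
          Finset.card_lt_card hssub
        have h2 : w₁.toFinset.card ≤ Multiset.card w₁ := Multiset.toFinset_card_le w₁
        have h3 : Multiset.card w₁ = Multiset.card a + Multiset.card v := by
          rw [hw₁, Multiset.card_add]
        omega
  exact Subrelation.wf (fun {w₁ w} h => key w w₁ h)
    (InvImage.wf (fun w => (stdW w).toFinset) hR)
end
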